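/- Let C be the simple graph on vertex set {1,2,...,12} whose edges are those of the basic block B on {1,...,7} (edge set {12,14,15,17,23,24,25,26,27,34,35,45,46,47,67}) together with the 5-cycle edges {8,9},{9,10},{10,11},{11,12},{8,12} and the attachment edges {1,8},{7,12}. For every assignment of colors from {white, gray} to the vertices 9, 10, 11 in which not all three are white, the 2-coloring of C whose gray class is {1,3,5,6,7} together with those of 9,10,11 colored gray (so that 2, 4, 8, 12 and the white ones among 9,10,11 are white) is a legal 2-coloring of C. -/

import Mathlib

/-- A set `U` of vertices of a simple graph `G` induces a linear forest:
the induced subgraph is acyclic and every vertex of `U` has at most 2 neighbors in `U`. -/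
def InducesLinearForest {V : Type*} (G : SimpleGraph V) (U : Set V) : Prop :=
  (G.induce U).IsAcyclic ∧ ∀ v ∈ U, {w | w ∈ U ∧ G.Adj v w}.ncard ≤ 2

/-- A legal 2-coloring of `G` (`true` = gray, `false` = white): each color class
induces a linear forest. -/
def IsLegal2Coloring {V : Type*} (G : SimpleGraph V) (c : V → Bool) : Prop :=
  InducesLinearForest G {v | c v = true} ∧ InducesLinearForest G {v | c v = false}

/-- The edge set of the basic building block `B`. -/
def BEdges : Set (ℕ × ℕ) :=
  {(1,2),(1,4),(1,5),(1,7),(2,3),(2,4),(2,5),(2,6),(2,7),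
   (3,4),(3,5),(4,5),(4,6),(4,7),(6,7)}

/-- Vertex set {1, …, 12}. -/
abbrev V12 : Type := {m : ℕ // m ∈ Finset.Icc 1 12}

/-- The edge set of the three-variable clause gadget `C`: the block `B` together with
the 5-cycle 8–9–10–11–12–8 and the attachment edges {1,8} and {7,12}. -/
def CEdges : Set (ℕ × ℕ) :=
  BEdges ∪ {(8,9),(9,10),(10,11),(11,12),(8,12),(1,8),(7,12)}

/-- The three-variable clause gadget `C` on vertex set {1, …, 12}. -/
def CGraph : SimpleGraph V12 :=
  SimpleGraph.fromRel (fun u v => (u.val, v.val) ∈ CEdges)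

/-!
An injective map `φ : U → ℕ` sending every edge of `G[U]` to a pair of consecutive integers
embeds `G[U]` into the path on `ℕ`, so `U` induces a linear forest. In `C` the gray class is
contained in the paths 3–5–1–7–6 and 9–10–11, and the white class, which misses some gray
vertex `k` among 9, 10, 11, is contained in the edge 2–4 together with the 5-cycle
8–9–10–11–12 cut open at `k`.
-/

open SimpleGraph

theorem isAcyclic_hasse_nat : (hasse ℕ).IsAcyclic := by
  refine isAcyclic_iff_forall_adj_isBridge.mpr ?_
  suffices h : ∀ n, (hasse ℕ).IsBridge s(n, n + 1) by
    intro a b hab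
    rcases hasse_adj.mp hab with hab | hab
    · simpa [(Nat.covBy_iff_add_one_eq.mp hab).symm] using h a
    · simpa [(Nat.covBy_iff_add_one_eq.mp hab).symm, Sym2.eq_swap] using h b
  intro n
  refine isBridge_iff_forall_walk_mem_edges.mpr fun p => ?_
  -- a walk from `n` to `n + 1` has to leave `{x | x ≤ n}`, and the only way out is `n + 1`
  obtain ⟨d, hd, hfst, hsnd⟩ := p.exists_boundary_dart {x | x ≤ n} (le_refl n) (by simp)
  have hstep : d.fst + 1 = d.snd := by
    rcases hasse_adj.mp d.adj with h | h <;> simp only [Nat.covBy_iff_add_one_eq] at h <;> grind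
  have hfst' : d.fst = n := by simp only [Set.mem_ofPred_eq, not_le] at hfst hsnd; omega
  have hd_edge : d.edge = s(n, n + 1) := by
    rw [Dart.edge, ← Prod.mk.eta (p := d.toProd), hfst', ← hstep, hfst']
  exact hd_edge ▸ List.mem_map_of_mem hd

theorem InducesLinearForest.of_injOn {V : Type*} {G : SimpleGraph V} {U : Set V} (φ : V → ℕ)
    (hinj : Set.InjOn φ U) (hadj : ∀ a ∈ U, ∀ b ∈ U, G.Adj a b → (hasse ℕ).Adj (φ a) (φ b)) :
    InducesLinearForest G U := by
  refine ⟨isAcyclic_hasse_nat.comap ⟨fun w => φ w, fun {a b} h => hadj a a.2 b b.2 h⟩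
    (fun a b h => Subtype.ext (hinj a.2 b.2 h)), fun v hv => ?_⟩
  calc {w | w ∈ U ∧ G.Adj v w}.ncard ≤ ({φ v + 1, φ v - 1} : Set ℕ).ncard := by
        refine Set.ncard_le_ncard_of_injOn φ (fun w ⟨hw, hvw⟩ => ?_) (hinj.mono fun w hw => hw.1)
        rcases hasse_adj.mp (hadj v hv w hw hvw) with h | h <;>
          simp only [Nat.covBy_iff_add_one_eq] at h <;>
          simp only [Set.mem_insert_iff, Set.mem_singleton_iff] <;> omega
    _ ≤ 2 := (Set.ncard_insert_le _ _).trans (by simp)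

instance : DecidablePred (· ∈ CEdges) := fun _ => by unfold CEdges BEdges; infer_instance

instance : DecidableRel CGraph.Adj := fun _ _ => inferInstanceAs (Decidable (_ ≠ _ ∧ _))

theorem inducesLinearForest_CGraph_of_list {U : Set V12} (L : List ℕ) (hU : ∀ v ∈ U, v.val ∈ L)
    (hL : ∀ a b : V12, a.val ∈ L → b.val ∈ L → CGraph.Adj a b →
      L.idxOf a.val + 1 = L.idxOf b.val ∨ L.idxOf b.val + 1 = L.idxOf a.val) :
    InducesLinearForest CGraph U := by
  refine .of_injOn (fun v => L.idxOf v.val)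
    (fun a ha b _ h => Subtype.ext ((List.idxOf_inj (hU a ha)).mp h)) fun a ha b hb hab => ?_
  rw [hasse_adj, Nat.covBy_iff_add_one_eq, Nat.covBy_iff_add_one_eq]
  exact hL a b (hU a ha) (hU b hb) hab

/-- For every assignment of colors to the vertices 9, 10, 11 in which they are not
all white, the 2-coloring of `C` whose gray class is {1,3,5,6,7} together with the
gray ones among 9, 10, 11 (so that 2, 4, 8, 12 and the white ones among 9, 10, 11
are white) is a legal 2-coloring of `C`. -/
theorem stmt3 (c : V12 → Bool)
    (hgray : ∀ v : V12, v.val ∈ ({1,3,5,6,7} : Set ℕ) → c v = true)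
    (hwhite : ∀ v : V12, v.val ∈ ({2,4,8,12} : Set ℕ) → c v = false)
    (hnotall : ¬ (c ⟨9, by decide⟩ = false ∧ c ⟨10, by decide⟩ = false ∧
        c ⟨11, by decide⟩ = false)) :
    IsLegal2Coloring CGraph c := by
  have gray_mem : ∀ v : V12, v.val ∉ ({2,4,8,12} : Set ℕ) → v.val ∈ [3,5,1,7,6,9,10,11] := by
    decide
  refine ⟨inducesLinearForest_CGraph_of_list _
    (fun v hv => gray_mem v fun h => by simp [hwhite v h] at hv) (by decide), ?_⟩
  have white (k : V12) (hk : c k = true) (L : List ℕ)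
      (hL : ∀ v : V12, v.val ∉ ({1,3,5,6,7} : Set ℕ) → v ≠ k → v.val ∈ L)
      (hcert : ∀ a b : V12, a.val ∈ L → b.val ∈ L → CGraph.Adj a b →
        L.idxOf a.val + 1 = L.idxOf b.val ∨ L.idxOf b.val + 1 = L.idxOf a.val) :
      InducesLinearForest CGraph {v | c v = false} :=
    inducesLinearForest_CGraph_of_list L (fun v hv => hL v (fun h => by simp [hgray v h] at hv)
      (by rintro rfl; simp [hk] at hv)) hcert
  simp only [not_and_or, Bool.not_eq_false] at hnotall
  rcases hnotall with h9 | h10 | h11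
  · exact white _ h9 [2,4,8,12,11,10] (by decide) (by decide)
  · exact white _ h10 [2,4,9,8,12,11] (by decide) (by decide)
  · exact white _ h11 [2,4,10,9,8,12] (by decide) (by decide)
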